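/- arXiv:2307.10572 — 3 statements merged into one kernel-verified Lean document; each statement's English description precedes it below -/
import Mathlib

section
/- Consider a multi-layer ScBM with population matrices P_l = ρ Y B_l Zᵀ for l = 1,…,L, and suppose the rank of Σ_{l=1}^L B_l B_lᵀ equals K_y (the full-rank case K = K_y). Let U ∈ ℝ^{n×K_y} be any matrix with orthonormal columns and Λ a K_y×K_y invertible diagonal matrix such that Σ_{l=1}^L P_l P_lᵀ = U Λ Uᵀ. Then for all nodes i, j ∈ [n]: Y_{i∗} = Y_{j∗} if and only if U_{i∗} = U_{j∗}; moreover, whenever Y_{i∗} ≠ Y_{j∗}, one has ‖U_{i∗} − U_{j∗}‖₂ = √(1/n_{g_i^y} + 1/n_{g_j^y}). -/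
open Matrix Finset
open scoped BigOperators Classical

noncomputable section

/-- Row membership matrix associated with a cluster assignment `g`. -/
def memb {n K : ℕ} (g : Fin n → Fin K) : Matrix (Fin n) (Fin K) ℝ :=
  Matrix.of fun i k => if g i = k then 1 else 0

/-- Size of cluster `k` under assignment `g`. -/
def csize {n K : ℕ} (g : Fin n → Fin K) (k : Fin K) : ℕ :=
  (Finset.univ.filter fun i => g i = k).card

/-- Euclidean distance between the `i`-th and `j`-th rows of `M`. -/
def rowDist {n K : ℕ} (M : Matrix (Fin n) (Fin K) ℝ) (i j : Fin n) : ℝ :=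
  Real.sqrt (∑ m, (M i m - M j m) ^ 2)

/-! The eigenvectors satisfy `U = Y W` with `W = M U Λ⁻¹`, because `∑ P_l P_lᵀ = Y M`
(with `M = ∑ ρ B_l Zᵀ P_lᵀ`) factors through `Y`. Since `YᵀY = diag(n_k)`, orthonormality
`UᵀU = 1` reads `Wᵀ diag(n_k) W = 1`; as `W` is square this forces `W Wᵀ = diag(1 / n_k)`.
So the rows of `U` are the rows `W_{g_i}` of `W`, which are pairwise orthogonal with squared
norms `1 / n_k`. -/

section Membership

variable {n K : ℕ} (g : Fin n → Fin K)

lemma memb_row_eq_iff (i j : Fin n) : memb g i = memb g j ↔ g i = g j := by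
  refine ⟨fun h => ?_, fun h => funext fun k => by simp [memb, h]⟩
  simpa [memb, eq_comm] using congrFun h (g i)

lemma memb_mul_apply {m : Type*} (W : Matrix (Fin K) m ℝ) (i : Fin n) :
    (memb g * W) i = W (g i) := by
  ext x
  simp [Matrix.mul_apply, memb, ite_mul]

lemma transpose_memb_mul_memb :
    (memb g)ᵀ * memb g = diagonal fun k => (csize g k : ℝ) := by
  ext k k'
  simp only [Matrix.mul_apply, transpose_apply, memb, of_apply, ite_mul, one_mul, zero_mul,
    ← Finset.sum_filter, diagonal_apply, csize]
  split_ifs with h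
  · subst h
    simp [Finset.filter_filter]
  · refine Finset.sum_eq_zero fun x hx => ?_
    simp only [Finset.mem_filter] at hx
    exact absurd (hx.1.2.symm.trans hx.2) h

end Membership

section Spectral

variable {R m r k : Type*} [Field R] [Fintype m] [Fintype r] [Fintype k] [DecidableEq k]

lemma eq_mul_of_mul_eq_mul_diagonal_mul_transpose {Y : Matrix m r R} {M : Matrix r m R}
    {U : Matrix m k R} {d : k → R} (hUorth : Uᵀ * U = 1) (hd : ∀ x, d x ≠ 0)
    (hYM : Y * M = U * diagonal d * Uᵀ) :
    U = Y * (M * U * diagonal fun x => (d x)⁻¹) := by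
  have hdd : diagonal d * diagonal (fun x => (d x)⁻¹) = 1 := by
    rw [diagonal_mul_diagonal, ← diagonal_one]
    exact congrArg diagonal (funext fun x => mul_inv_cancel₀ (hd x))
  calc U = U * diagonal d * (Uᵀ * U) * diagonal (fun x => (d x)⁻¹) := by
        rw [hUorth, Matrix.mul_one, Matrix.mul_assoc, hdd, Matrix.mul_one]
    _ = Y * (M * U * diagonal fun x => (d x)⁻¹) := by
        rw [← Matrix.mul_assoc (U * diagonal d), ← hYM]
        simp only [Matrix.mul_assoc]

lemma mul_transpose_eq_diagonal_inv {W : Matrix k k R} {c : k → R} (hc : ∀ x, c x ≠ 0)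
    (hW : Wᵀ * (diagonal c * W) = 1) :
    W * Wᵀ = diagonal fun x => (c x)⁻¹ := by
  have hcW : diagonal c * (W * Wᵀ) = 1 := by
    rw [← Matrix.mul_assoc]; exact mul_eq_one_comm.mp hW
  have hcc : diagonal (fun x => (c x)⁻¹) * diagonal c = 1 := by
    rw [diagonal_mul_diagonal, ← diagonal_one]
    exact congrArg diagonal (funext fun x => inv_mul_cancel₀ (hc x))
  calc W * Wᵀ = diagonal (fun x => (c x)⁻¹) * (diagonal c * (W * Wᵀ)) := by
        rw [← Matrix.mul_assoc, hcc, Matrix.one_mul]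
    _ = diagonal fun x => (c x)⁻¹ := by rw [hcW, Matrix.mul_one]

end Spectral

section OrthogonalRows

variable {k m : Type*} [Fintype m] [DecidableEq k] {W : Matrix k m ℝ} {e : k → ℝ}

lemma sum_mul_eq_of_mul_transpose_eq_diagonal (hW : W * Wᵀ = diagonal e) (a b : k) :
    ∑ t, W a t * W b t = if a = b then e a else 0 := by
  simpa [Matrix.mul_apply, diagonal_apply] using congrFun (congrFun hW a) b

lemma eq_of_row_eq_of_mul_transpose_eq_diagonal (hW : W * Wᵀ = diagonal e) {a b : k}
    (ha : e a ≠ 0) (hab : W a = W b) : a = b := by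
  by_contra hne
  have hzero := sum_mul_eq_of_mul_transpose_eq_diagonal hW a b
  rw [if_neg hne, ← hab, sum_mul_eq_of_mul_transpose_eq_diagonal hW a a, if_pos rfl] at hzero
  exact ha hzero

lemma sum_row_sub_sq_of_mul_transpose_eq_diagonal (hW : W * Wᵀ = diagonal e) {a b : k}
    (hab : a ≠ b) : ∑ t, (W a t - W b t) ^ 2 = e a + e b := by
  have hexpand : ∀ t, (W a t - W b t) ^ 2 = W a t * W a t - 2 * (W a t * W b t) + W b t * W b t :=
    fun t => by ring
  simp only [hexpand, Finset.sum_add_distrib, Finset.sum_sub_distrib, ← Finset.mul_sum,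
    sum_mul_eq_of_mul_transpose_eq_diagonal hW, if_neg hab, if_true]
  ring

end OrthogonalRows

theorem stmt0_general
    (n L Ky Kz : ℕ)
    (ρ : ℝ)
    (gy : Fin n → Fin Ky) (gz : Fin n → Fin Kz)
    (hny : ∀ k, 0 < csize gy k)
    (B : Fin L → Matrix (Fin Ky) (Fin Kz) ℝ)
    (P : Fin L → Matrix (Fin n) (Fin n) ℝ)
    (hP : ∀ l, P l = ρ • (memb gy * B l * (memb gz)ᵀ))
    -- eigendecomposition ∑ P_l P_lᵀ = U Λ Uᵀ with U column-orthonormal, Λ invertible diagonal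
    (U : Matrix (Fin n) (Fin Ky) ℝ) (hUorth : Uᵀ * U = 1)
    (d : Fin Ky → ℝ) (hd : ∀ m, d m ≠ 0)
    (hdecomp : ∑ l, P l * (P l)ᵀ = U * Matrix.diagonal d * Uᵀ)
    (i j : Fin n) :
    (memb gy i = memb gy j ↔ U i = U j) ∧
      (memb gy i ≠ memb gy j →
        rowDist U i j =
          Real.sqrt (1 / (csize gy (gy i) : ℝ) + 1 / (csize gy (gy j) : ℝ))) := by
  have hcsize : ∀ k, (csize gy k : ℝ) ≠ 0 := fun k => by exact_mod_cast (hny k).ne'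
  have hYM : memb gy * ∑ l, ρ • (B l * (memb gz)ᵀ) * (P l)ᵀ = U * diagonal d * Uᵀ := by
    rw [← hdecomp, Matrix.mul_sum]
    exact Finset.sum_congr rfl fun l _ => by
      simp only [hP l, Matrix.mul_smul, Matrix.smul_mul, Matrix.mul_assoc]
  set W := (∑ l, ρ • (B l * (memb gz)ᵀ) * (P l)ᵀ) * U * diagonal fun x => (d x)⁻¹
  have hUW : U = memb gy * W := eq_mul_of_mul_eq_mul_diagonal_mul_transpose hUorth hd hYM
  have hWW : W * Wᵀ = diagonal fun k => (csize gy k : ℝ)⁻¹ := by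
    refine mul_transpose_eq_diagonal_inv hcsize ?_
    rw [← transpose_memb_mul_memb, Matrix.mul_assoc (memb gy)ᵀ, ← Matrix.mul_assoc Wᵀ,
      ← transpose_mul, ← hUW, hUorth]
  have hrow : ∀ i, U i = W (gy i) := fun i => by rw [hUW, memb_mul_apply]
  simp only [ne_eq, memb_row_eq_iff, hrow]
  refine ⟨⟨congrArg W, eq_of_row_eq_of_mul_transpose_eq_diagonal hWW (inv_ne_zero (hcsize _))⟩,
    fun hne => ?_⟩
  have hentry : ∀ i t, U i t = W (gy i) t := fun i t => congrFun (hrow i) t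
  simpa only [rowDist, hentry, one_div] using
    congrArg Real.sqrt (sum_row_sub_sq_of_mul_transpose_eq_diagonal hWW hne)

/-- full-rank case of Lemma 2.1 (row clusters). -/
theorem stmt0
    (n L Ky Kz : ℕ) (hn : 0 < n) (hL : 0 < L)
    (ρ : ℝ) (hρ0 : 0 < ρ) (hρ1 : ρ ≤ 1)
    (gy : Fin n → Fin Ky) (gz : Fin n → Fin Kz)
    (hny : ∀ k, 0 < csize gy k) (hnz : ∀ k, 0 < csize gz k)
    (B : Fin L → Matrix (Fin Ky) (Fin Kz) ℝ)
    (hB : ∀ l a b, 0 ≤ B l a b ∧ B l a b ≤ 1)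
    (P : Fin L → Matrix (Fin n) (Fin n) ℝ)
    (hP : ∀ l, P l = ρ • (memb gy * B l * (memb gz)ᵀ))
    -- full-rank case: rank(∑ B_l B_lᵀ) = K_y
    (hrank : (∑ l, B l * (B l)ᵀ).rank = Ky)
    -- eigendecomposition ∑ P_l P_lᵀ = U Λ Uᵀ with U column-orthonormal, Λ invertible diagonal
    (U : Matrix (Fin n) (Fin Ky) ℝ) (hUorth : Uᵀ * U = 1)
    (d : Fin Ky → ℝ) (hd : ∀ m, d m ≠ 0)
    (hdecomp : ∑ l, P l * (P l)ᵀ = U * Matrix.diagonal d * Uᵀ)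
    (i j : Fin n) :
    (memb gy i = memb gy j ↔ U i = U j) ∧
      (memb gy i ≠ memb gy j →
        rowDist U i j =
          Real.sqrt (1 / (csize gy (gy i) : ℝ) + 1 / (csize gy (gy j) : ℝ))) :=
  stmt0_general n L Ky Kz ρ gy gz hny B P hP U hUorth d hd hdecomp i j
end
end

section
/- Let H be an n×s real matrix of full column rank such that the s-th largest eigenvalue of H Hᵀ is at least h for some h > 0, and let G be an s×s real symmetric matrix with rank(G) = j ≤ s whose j-th largest eigenvalue is at least g for some g > 0. Then the j-th largest eigenvalue of H G Hᵀ satisfies λ_j(H G Hᵀ) ≥ h g. -/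
open Matrix Finset
open scoped BigOperators Classical

/-!
Put `B = HᵀH`, invertible because `H` has full column rank, and `R = H B⁻¹`, a right inverse
of `Hᵀ`. As `rank (HHᵀ) = s` and `s` eigenvalues of `HHᵀ` are `≥ h`, every eigenvalue of `HHᵀ`
is `0` or `≥ h`; since `R = HHᵀ (R B⁻¹)` ranges in the image of `HHᵀ`, this gives
`h ‖R y‖² ≤ (R y)ᵀ HHᵀ (R y) = ‖y‖²`. On the span `W` of the eigenvectors of `G` with
eigenvalue `≥ g` (of dimension `≥ j`) we have `yᵀGy ≥ g ‖y‖²`, hence every `x = R y` in the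
space `R W`, again of dimension `≥ j`, satisfies `xᵀ HGHᵀ x = yᵀGy ≥ g ‖y‖² ≥ hg ‖x‖²`.
By the min-max principle `HGHᵀ` has at least `j` eigenvalues `≥ hg`.
-/

namespace Matrix

variable {ι κ : Type*} [Fintype ι] [Fintype κ]

lemma dotProduct_mul_mul_transpose_mulVec (H : Matrix ι κ ℝ) (G : Matrix κ κ ℝ) (x : ι → ℝ) :
    x ⬝ᵥ ((H * G * Hᵀ) *ᵥ x) = (Hᵀ *ᵥ x) ⬝ᵥ (G *ᵥ (Hᵀ *ᵥ x)) := by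
  rw [← mulVec_mulVec, ← mulVec_mulVec, dotProduct_mulVec, ← mulVec_transpose]

variable [DecidableEq κ]

lemma transpose_mulVec_dotProduct_transpose_mulVec {U : Matrix κ κ ℝ} (hU : U * Uᵀ = 1)
    (a b : κ → ℝ) : (Uᵀ *ᵥ a) ⬝ᵥ (Uᵀ *ᵥ b) = a ⬝ᵥ b := by
  rw [dotProduct_mulVec, mulVec_transpose, vecMul_vecMul, hU, vecMul_one]

lemma isUnit_of_rank_eq_card {K : Type*} [Field K] {A : Matrix κ κ K}
    (h : A.rank = Fintype.card κ) : IsUnit A := by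
  rw [← mulVec_surjective_iff_isUnit, ← coe_mulVecLin, ← LinearMap.range_eq_top]
  apply Submodule.eq_top_of_finrank_eq
  rw [← rank, h, Module.finrank_fintype_fun_eq_card]

namespace IsHermitian

variable {M : Matrix κ κ ℝ} (hM : M.IsHermitian)

noncomputable def eigenCoord (x : κ → ℝ) (i : κ) : ℝ :=
  (hM.eigenvectorBasis i : κ → ℝ) ⬝ᵥ x

lemma eigenCoord_mulVec (x : κ → ℝ) (i : κ) :
    hM.eigenCoord (M *ᵥ x) i = hM.eigenvalues i * hM.eigenCoord x i := by
  have hMt : Mᵀ = M := by simpa [conjTranspose_eq_transpose_of_trivial] using hM.eq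
  rw [eigenCoord, dotProduct_mulVec, ← mulVec_transpose, hMt, mulVec_eigenvectorBasis,
    smul_dotProduct, smul_eq_mul, eigenCoord]

lemma dotProduct_eq_sum_eigenCoord_mul (a b : κ → ℝ) :
    a ⬝ᵥ b = ∑ i, hM.eigenCoord a i * hM.eigenCoord b i := by
  have hU : (hM.eigenvectorUnitary : Matrix κ κ ℝ) * (hM.eigenvectorUnitary : Matrix κ κ ℝ)ᵀ = 1 :=
    by simpa [star_eq_conjTranspose] using Unitary.mul_star_self_of_mem hM.eigenvectorUnitary.2
  rw [← transpose_mulVec_dotProduct_transpose_mulVec hU a b]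
  rfl

lemma dotProduct_self_eq_sum_eigenCoord_sq (x : κ → ℝ) :
    x ⬝ᵥ x = ∑ i, hM.eigenCoord x i ^ 2 := by
  simp only [hM.dotProduct_eq_sum_eigenCoord_mul, sq]

lemma dotProduct_mulVec_eq_sum_eigenCoord (x : κ → ℝ) :
    x ⬝ᵥ (M *ᵥ x) = ∑ i, hM.eigenvalues i * hM.eigenCoord x i ^ 2 := by
  simp only [hM.dotProduct_eq_sum_eigenCoord_mul, eigenCoord_mulVec]
  exact Finset.sum_congr rfl fun i _ => by ring

lemma mul_dotProduct_self_le_of_eigenCoord_eq_zero {c : ℝ} {x : κ → ℝ}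
    (hx : ∀ i, hM.eigenvalues i < c → hM.eigenCoord x i = 0) :
    c * (x ⬝ᵥ x) ≤ x ⬝ᵥ (M *ᵥ x) := by
  rw [hM.dotProduct_self_eq_sum_eigenCoord_sq, hM.dotProduct_mulVec_eq_sum_eigenCoord,
    Finset.mul_sum]
  refine Finset.sum_le_sum fun i _ => ?_
  rcases lt_or_ge (hM.eigenvalues i) c with hi | hi
  · simp [hx i hi]
  · exact mul_le_mul_of_nonneg_right hi (sq_nonneg _)

lemma dotProduct_mulVec_lt_of_eigenCoord_eq_zero {c : ℝ} {x : κ → ℝ} (hx0 : x ≠ 0)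
    (hx : ∀ i, c ≤ hM.eigenvalues i → hM.eigenCoord x i = 0) :
    x ⬝ᵥ (M *ᵥ x) < c * (x ⬝ᵥ x) := by
  have hw : hM.eigenCoord x ≠ 0 := fun hw => hx0 <| by
    rw [← dotProduct_self_eq_zero, hM.dotProduct_self_eq_sum_eigenCoord_sq, hw]
    simp
  obtain ⟨i, hi⟩ := Function.ne_iff.mp hw
  rw [hM.dotProduct_self_eq_sum_eigenCoord_sq, hM.dotProduct_mulVec_eq_sum_eigenCoord,
    Finset.mul_sum]
  refine Finset.sum_lt_sum (fun k _ => ?_) ⟨i, mem_univ _, ?_⟩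
  · rcases lt_or_ge (hM.eigenvalues k) c with hk | hk
    · exact mul_le_mul_of_nonneg_right hk.le (sq_nonneg _)
    · simp [hx k hk]
  · have hic : hM.eigenvalues i < c := lt_of_not_ge fun h => hi (hx i h)
    exact mul_lt_mul_of_pos_right hic (by simpa [sq_pos_iff] using hi)

theorem finrank_le_card_eigenvalues_ge {c : ℝ} (W : Submodule ℝ (κ → ℝ))
    (hW : ∀ x ∈ W, c * (x ⬝ᵥ x) ≤ x ⬝ᵥ (M *ᵥ x)) :
    Module.finrank ℝ W ≤ #{i | c ≤ hM.eigenvalues i} := by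
  let S : Set κ := {i | c ≤ hM.eigenvalues i}
  let f : W →ₗ[ℝ] (S → ℝ) := LinearMap.funLeft ℝ ℝ ((↑) : S → κ) ∘ₗ
    (hM.eigenvectorUnitary : Matrix κ κ ℝ)ᵀ.mulVecLin ∘ₗ W.subtype
  by_contra! hlt
  have hdim : Module.finrank ℝ (S → ℝ) < Module.finrank ℝ W := by
    simpa [S, Fintype.card_subtype] using hlt
  obtain ⟨⟨x, hxW⟩, hxker, hx0⟩ :=
    (Submodule.ne_bot_iff _).mp (LinearMap.ker_ne_bot_of_finrank_lt (f := f) hdim)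
  refine (hW x hxW).not_gt (hM.dotProduct_mulVec_lt_of_eigenCoord_eq_zero ?_ fun i hi => ?_)
  · simpa using hx0
  · exact congrFun hxker ⟨i, hi⟩

theorem exists_card_eigenvalues_ge_le_finrank (c : ℝ) :
    ∃ W : Submodule ℝ (κ → ℝ), #{i | c ≤ hM.eigenvalues i} ≤ Module.finrank ℝ W ∧
      ∀ x ∈ W, c * (x ⬝ᵥ x) ≤ x ⬝ᵥ (M *ᵥ x) := by
  let T : Set κ := {i | hM.eigenvalues i < c}
  let f : (κ → ℝ) →ₗ[ℝ] (T → ℝ) := LinearMap.funLeft ℝ ℝ ((↑) : T → κ) ∘ₗ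
    (hM.eigenvectorUnitary : Matrix κ κ ℝ)ᵀ.mulVecLin
  refine ⟨LinearMap.ker f, ?_, fun x hx =>
    hM.mul_dotProduct_self_le_of_eigenCoord_eq_zero fun i hi => congrFun hx ⟨i, hi⟩⟩
  have hrank := f.finrank_range_add_finrank_ker
  have hrange := (LinearMap.range f).finrank_le
  have hcard := Finset.card_filter_add_card_filter_not (s := Finset.univ)
    (fun i => c ≤ hM.eigenvalues i)
  simp only [Module.finrank_fintype_fun_eq_card, Fintype.card_subtype, not_le, T,
    Set.mem_ofPred_eq, Finset.card_univ] at hrank hrange hcard ⊢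
  omega

lemma eigenvalues_eq_zero_or_le {v : ℝ} (hv : 0 < v) {r : ℕ} (hrank : M.rank ≤ r)
    (hcount : r ≤ #{i | v ≤ hM.eigenvalues i}) (i : κ) :
    hM.eigenvalues i = 0 ∨ v ≤ hM.eigenvalues i := by
  have hsub : ({i | v ≤ hM.eigenvalues i} : Finset κ) ⊆ ({i | hM.eigenvalues i ≠ 0} : Finset κ) :=
    Finset.monotone_filter_right _ fun i _ hi => (hv.trans_le hi).ne'
  have heq := Finset.eq_of_subset_of_card_le hsub <| by
    rw [← Fintype.card_subtype, ← hM.rank_eq_card_non_zero_eigs]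
    exact hrank.trans hcount
  by_cases hi : hM.eigenvalues i = 0
  · exact Or.inl hi
  · have hmem : i ∈ ({i | hM.eigenvalues i ≠ 0} : Finset κ) := by simpa using hi
    rw [← heq] at hmem
    exact Or.inr (by simpa using hmem)

lemma mul_dotProduct_self_mulVec_le {v : ℝ}
    (heig : ∀ i, hM.eigenvalues i = 0 ∨ v ≤ hM.eigenvalues i) (x : κ → ℝ) :
    v * ((M *ᵥ x) ⬝ᵥ (M *ᵥ x)) ≤ (M *ᵥ x) ⬝ᵥ (M *ᵥ (M *ᵥ x)) := by
  refine hM.mul_dotProduct_self_le_of_eigenCoord_eq_zero fun i hi => ?_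
  rw [eigenCoord_mulVec]
  exact mul_eq_zero_of_left ((heig i).resolve_right hi.not_ge) _

end IsHermitian

section RightInverse

variable {H : Matrix ι κ ℝ} (hH : H.rank = Fintype.card κ)
include hH

lemma transpose_mul_mul_inv_transpose_mul_self : Hᵀ * (H * (Hᵀ * H)⁻¹) = 1 := by
  have hB : IsUnit (Hᵀ * H) := isUnit_of_rank_eq_card (by rw [rank_transpose_mul_self, hH])
  rw [← Matrix.mul_assoc, mul_nonsing_inv _ ((isUnit_iff_isUnit_det _).mp hB)]

lemma mul_dotProduct_self_le_of_eigenvalues_mul_transpose (hHH : (H * Hᵀ).IsHermitian) {h : ℝ}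
    (heig : ∀ i, hHH.eigenvalues i = 0 ∨ h ≤ hHH.eigenvalues i) (y : κ → ℝ) :
    h * (((H * (Hᵀ * H)⁻¹) *ᵥ y) ⬝ᵥ ((H * (Hᵀ * H)⁻¹) *ᵥ y)) ≤ y ⬝ᵥ y := by
  set R := H * (Hᵀ * H)⁻¹
  have hR : Hᵀ * R = 1 := transpose_mul_mul_inv_transpose_mul_self hH
  have hrange : R = (H * Hᵀ) * (R * (Hᵀ * H)⁻¹) := by
    rw [Matrix.mul_assoc, ← Matrix.mul_assoc Hᵀ, hR, Matrix.one_mul]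
  clear_value R
  have hy : y ⬝ᵥ y = (R *ᵥ y) ⬝ᵥ ((H * Hᵀ) *ᵥ (R *ᵥ y)) := by
    rw [← mulVec_mulVec, dotProduct_mulVec, ← mulVec_transpose, mulVec_mulVec, hR, one_mulVec]
  rw [hy, hrange, ← mulVec_mulVec]
  exact hHH.mul_dotProduct_self_mulVec_le heig _

end RightInverse

end Matrix

/-- `λ_j(M) ≥ v` is encoded as: at least `j` eigenvalues of `M`, counted with multiplicity,
are `≥ v`. -/
theorem stmt6_general
    (n s j : ℕ)
    (H : Matrix (Fin n) (Fin s) ℝ)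
    (G : Matrix (Fin s) (Fin s) ℝ)
    (hGsymm : G.IsHermitian)
    (hHH : (H * Hᵀ).IsHermitian)
    (hHGH : (H * G * Hᵀ).IsHermitian)
    -- H has full column rank
    (hHrank : H.rank = s)
    -- the s-th largest eigenvalue of H Hᵀ is at least h > 0
    (h : ℝ) (hh : 0 < h)
    (hHHeig : s ≤ (Finset.univ.filter fun i : Fin n => h ≤ hHH.eigenvalues i).card)
    -- rank(G) = j and the j-th largest eigenvalue of G is at least g > 0
    (g : ℝ) (hg : 0 < g)
    (hGeig : j ≤ (Finset.univ.filter fun a : Fin s => g ≤ hGsymm.eigenvalues a).card) :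
    -- conclusion: λ_j(H G Hᵀ) ≥ h g
    j ≤ (Finset.univ.filter fun i : Fin n => h * g ≤ hHGH.eigenvalues i).card := by
  have hHrank' : H.rank = Fintype.card (Fin s) := by rw [hHrank, Fintype.card_fin]
  have hHHeig' := hHH.eigenvalues_eq_zero_or_le hh (rank_self_mul_transpose H ▸ hHrank.le) hHHeig
  set R := H * (Hᵀ * H)⁻¹
  have hR : Hᵀ * R = 1 := transpose_mul_mul_inv_transpose_mul_self hHrank'
  have hRinj : Function.Injective R.mulVecLin := fun y y' e => by
    simpa [hR] using congrArg (Hᵀ *ᵥ ·) e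
  obtain ⟨W, hWcard, hW⟩ := hGsymm.exists_card_eigenvalues_ge_le_finrank g
  calc j ≤ _ := hGeig
    _ ≤ Module.finrank ℝ W := hWcard
    _ = Module.finrank ℝ (W.map R.mulVecLin) := (Submodule.equivMapOfInjective _ hRinj W).finrank_eq
    _ ≤ _ := hHGH.finrank_le_card_eigenvalues_ge _ ?_
  rintro _ ⟨y, hy, rfl⟩
  calc h * g * ((R *ᵥ y) ⬝ᵥ (R *ᵥ y)) = g * (h * ((R *ᵥ y) ⬝ᵥ (R *ᵥ y))) := by ring
    _ ≤ g * (y ⬝ᵥ y) := mul_le_mul_of_nonneg_left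
        (mul_dotProduct_self_le_of_eigenvalues_mul_transpose hHrank' hHH hHHeig' y) hg.le
    _ ≤ y ⬝ᵥ (G *ᵥ y) := hW y hy
    _ = (R *ᵥ y) ⬝ᵥ ((H * G * Hᵀ) *ᵥ (R *ᵥ y)) := by
      rw [dotProduct_mul_mul_transpose_mulVec, mulVec_mulVec, hR, one_mulVec]

/-- Lemma A.2 (lower bound on the j-th largest eigenvalue of H G Hᵀ).
The property "the j-th largest eigenvalue of a symmetric matrix M is at least v"
is encoded as: at least j of the eigenvalues of M (with multiplicity) are ≥ v. -/
theorem stmt6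
    (n s j : ℕ) (hj : j ≤ s)
    (H : Matrix (Fin n) (Fin s) ℝ)
    (G : Matrix (Fin s) (Fin s) ℝ)
    (hGsymm : G.IsHermitian)
    (hHH : (H * Hᵀ).IsHermitian)
    (hHGH : (H * G * Hᵀ).IsHermitian)
    -- H has full column rank
    (hHrank : H.rank = s)
    -- the s-th largest eigenvalue of H Hᵀ is at least h > 0
    (h : ℝ) (hh : 0 < h)
    (hHHeig : s ≤ (Finset.univ.filter fun i : Fin n => h ≤ hHH.eigenvalues i).card)
    -- rank(G) = j and the j-th largest eigenvalue of G is at least g > 0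
    (hGrank : G.rank = j)
    (g : ℝ) (hg : 0 < g)
    (hGeig : j ≤ (Finset.univ.filter fun a : Fin s => g ≤ hGsymm.eigenvalues a).card) :
    -- conclusion: λ_j(H G Hᵀ) ≥ h g
    j ≤ (Finset.univ.filter fun i : Fin n => h * g ≤ hHGH.eigenvalues i).card :=
  stmt6_general n s j H G hGsymm hHH hHGH hHrank h hh hHHeig g hg hGeig
end

section
/- Consider a multi-layer ScBM satisfying Assumption 1 with constant c0 ≥ 1, let K := rank(Σ_{l=1}^L B_l B_lᵀ), set U := Y Δ_y^{-1} Q^R ∈ ℝ^{n×K} and 𝔹^R := Σ_{l=1}^L B_l Δ_z² B_lᵀ ∈ ℝ^{K_y×K_y}. Then for any two nodes i, j ∈ [n] lying in row clusters k := g_i^y and k' := g_j^y, one has the exact identity Σ_{m=1}^K D^R_{mm} ( Q^R_{k m}/√(n_k^y) − Q^R_{k' m}/√(n_{k'}^y) )² = 𝔹^R_{kk} + 𝔹^R_{k'k'} − 2 𝔹^R_{kk'}, and consequently c0² L n² · ‖U_{i∗} − U_{j∗}‖₂² ≥ 𝔹^R_{kk} + 𝔹^R_{k'k'} − 2 𝔹^R_{kk'}.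 -/
/-!
Read entrywise, `Δ_y 𝔹^R Δ_y = Q^R D^R (Q^R)ᵀ` says `∑ₘ D_mm Q_km Q_k'm = √n_k 𝔹^R_kk' √n_k'`, and
expanding the square gives the identity. Row `i` of `U` is `Q^R_{g_i ∗} / √n_{g_i}`, so the
inequality follows once every `D_mm ≤ L n²`. Now `Δ_y 𝔹^R Δ_y = ∑_l N_l N_lᵀ` with
`N_l = Δ_y B_l Δ_z` is positive semidefinite, so the `D_mm` are nonnegative and sum to its trace
`∑_l ‖N_l‖_F² = ∑_l ∑_{a,c} n_a B_l(a,c)² n_c ≤ L n²`, because the entries of `B_l` lie in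
`[0, 1]` and the cluster sizes add up to `n`.
-/


open Matrix Finset
open scoped BigOperators Classical

noncomputable section

/-- Diagonal matrix Δ = diag(√n_1, …, √n_K). -/
def Dmat {n K : ℕ} (g : Fin n → Fin K) : Matrix (Fin K) (Fin K) ℝ :=
  Matrix.diagonal fun k => Real.sqrt (csize g k)

/-- Diagonal matrix Δ⁻¹ = diag(1/√n_1, …, 1/√n_K). -/
def DmatInv {n K : ℕ} (g : Fin n → Fin K) : Matrix (Fin K) (Fin K) ℝ :=
  Matrix.diagonal fun k => (Real.sqrt (csize g k))⁻¹

section Spectral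

variable {ι κ : Type*} [Fintype κ]

lemma sum_mul_sub_sq (d x y : κ → ℝ) :
    ∑ m, d m * (x m - y m) ^ 2 =
      ∑ m, d m * x m * x m + ∑ m, d m * y m * y m - 2 * ∑ m, d m * x m * y m := by
  rw [mul_sum, ← sum_add_distrib, ← sum_sub_distrib]
  exact sum_congr rfl fun m _ => by ring

variable [DecidableEq κ]

lemma Matrix.mul_diagonal_mul_transpose_apply (Q : Matrix ι κ ℝ) (d : κ → ℝ) (a b : ι) :
    (Q * diagonal d * Qᵀ) a b = ∑ m, d m * Q a m * Q b m := by
  rw [mul_apply]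
  simp only [mul_diagonal, transpose_apply]
  exact sum_congr rfl fun m _ => by ring

variable [Fintype ι]

lemma Matrix.trace_eq_sum_of_eq_mul_diagonal_mul_transpose {M : Matrix ι ι ℝ} {Q : Matrix ι κ ℝ}
    {d : κ → ℝ} (hQ : Qᵀ * Q = 1) (hM : M = Q * diagonal d * Qᵀ) : M.trace = ∑ m, d m := by
  rw [hM, trace_mul_cycle, hQ, one_mul, trace_diagonal]

lemma Matrix.PosSemidef.le_trace_of_eq_mul_diagonal_mul_transpose {M : Matrix ι ι ℝ}
    (hM : M.PosSemidef) {Q : Matrix ι κ ℝ} {d : κ → ℝ} (hQ : Qᵀ * Q = 1)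
    (hdec : M = Q * diagonal d * Qᵀ) (m : κ) : d m ≤ M.trace := by
  have hdiag : diagonal d = Qᵀ * M * Q := by
    rw [hdec, ← Matrix.mul_assoc, ← Matrix.mul_assoc, hQ, Matrix.one_mul, Matrix.mul_assoc, hQ,
      Matrix.mul_one]
  have hd : (diagonal d).PosSemidef := by
    simpa [hdiag] using hM.conjTranspose_mul_mul_same Q
  rw [trace_eq_sum_of_eq_mul_diagonal_mul_transpose hQ hdec]
  exact single_le_sum (fun m _ => posSemidef_diagonal_iff.mp hd m) (mem_univ m)

lemma sum_mul_div_sub_div_sq_eq {A : Matrix ι ι ℝ} {s : ι → ℝ} {Q : Matrix ι κ ℝ} {d : κ → ℝ}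
    [DecidableEq ι] (hdec : diagonal s * A * diagonal s = Q * diagonal d * Qᵀ)
    {a b : ι} (ha : s a ≠ 0) (hb : s b ≠ 0) :
    ∑ m, d m * (Q a m / s a - Q b m / s b) ^ 2 = A a a + A b b - 2 * A a b := by
  have entry : ∀ {a b}, s a ≠ 0 → s b ≠ 0 →
      ∑ m, d m * (Q a m / s a) * (Q b m / s b) = A a b := by
    intro a b ha hb
    have h := congrFun (congrFun hdec a) b
    rw [mul_diagonal_mul_transpose_apply] at h
    simp only [mul_diagonal, diagonal_mul] at h
    calc ∑ m, d m * (Q a m / s a) * (Q b m / s b)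
        = (∑ m, d m * Q a m * Q b m) / (s a * s b) := by
          rw [sum_div]; exact sum_congr rfl fun m _ => by field_simp
      _ = A a b := by rw [← h]; field_simp
  rw [sum_mul_sub_sq, entry ha ha, entry hb hb, entry ha hb]

end Spectral

section ClusterMatrices

variable {n K : ℕ}

lemma csize_apply_pos (g : Fin n → Fin K) (i : Fin n) : 0 < csize g (g i) :=
  card_pos.mpr ⟨i, by simp⟩

lemma sum_csize (g : Fin n → Fin K) : ∑ k, (csize g k : ℝ) = n := by
  have h : ∑ k, csize g k = n := by
    simp only [csize]
    rw [← card_eq_sum_card_fiberwise fun i _ => mem_univ (g i), card_univ, Fintype.card_fin]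
  exact_mod_cast h

lemma Dmat_transpose (g : Fin n → Fin K) : (Dmat g)ᵀ = Dmat g :=
  diagonal_transpose _

lemma memb_mul_DmatInv_mul_apply {κ : Type*} [Fintype κ] (g : Fin n → Fin K)
    (Q : Matrix (Fin K) κ ℝ) (i : Fin n) (m : κ) :
    (memb g * DmatInv g * Q) i m = Q (g i) m / Real.sqrt (csize g (g i)) := by
  rw [memb, DmatInv, Matrix.mul_assoc, mul_apply, sum_eq_single (g i)]
  · simp [div_eq_inv_mul]
  · intro k _ hk
    simp [Ne.symm hk]
  · simp

lemma trace_Dmat_mul_mul_Dmat_mul_transpose_le {n₁ n₂ K₁ K₂ : ℕ} (g₁ : Fin n₁ → Fin K₁)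
    (g₂ : Fin n₂ → Fin K₂) (B : Matrix (Fin K₁) (Fin K₂) ℝ) (hB : ∀ a c, 0 ≤ B a c ∧ B a c ≤ 1) :
    ((Dmat g₁ * B * Dmat g₂) * (Dmat g₁ * B * Dmat g₂)ᵀ).trace ≤ n₁ * n₂ := by
  have entry_sq : ∀ a c, (Dmat g₁ * B * Dmat g₂) a c * (Dmat g₁ * B * Dmat g₂) a c
      = (csize g₁ a : ℝ) * (B a c * B a c) * csize g₂ c := by
    intro a c
    simp only [Dmat, mul_diagonal, diagonal_mul]
    rw [show ∀ x y z : ℝ, x * y * z * (x * y * z) = (x * x) * (y * y) * (z * z) by intros; ring,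
      Real.mul_self_sqrt (Nat.cast_nonneg _), Real.mul_self_sqrt (Nat.cast_nonneg _)]
  calc ((Dmat g₁ * B * Dmat g₂) * (Dmat g₁ * B * Dmat g₂)ᵀ).trace
      = ∑ a, ∑ c, (csize g₁ a : ℝ) * (B a c * B a c) * csize g₂ c := by
        refine sum_congr rfl fun a _ => ?_
        rw [diag_apply, mul_apply]
        exact sum_congr rfl fun c _ => by rw [transpose_apply, entry_sq]
    _ ≤ ∑ a, ∑ c, (csize g₁ a : ℝ) * 1 * csize g₂ c := by
        gcongr with a _ c _
        exact mul_le_one₀ (hB a c).2 (hB a c).1 (hB a c).2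
    _ = n₁ * n₂ := by
        simp only [mul_one, ← mul_sum, ← sum_mul, sum_csize]

lemma Dmat_mul_sum_mul_Dmat {n₁ n₂ K₁ K₂ L : ℕ} (g₁ : Fin n₁ → Fin K₁) (g₂ : Fin n₂ → Fin K₂)
    (B : Fin L → Matrix (Fin K₁) (Fin K₂) ℝ) :
    Dmat g₁ * (∑ l, B l * Dmat g₂ ^ 2 * (B l)ᵀ) * Dmat g₁ =
      ∑ l, (Dmat g₁ * B l * Dmat g₂) * (Dmat g₁ * B l * Dmat g₂)ᵀ := by
  rw [Matrix.mul_sum, Matrix.sum_mul]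
  refine sum_congr rfl fun l _ => ?_
  simp only [transpose_mul, Dmat_transpose, sq, Matrix.mul_assoc]

end ClusterMatrices

theorem stmt17_general
    (n L Ky Kz K : ℕ)
    (gy : Fin n → Fin Ky) (gz : Fin n → Fin Kz)
    (B : Fin L → Matrix (Fin Ky) (Fin Kz) ℝ)
    (hB : ∀ l a b, 0 ≤ B l a b ∧ B l a b ≤ 1)
    -- Assumption 1 (balanced clusters) with constant c0 ≥ 1
    (c0 : ℝ) (hc0 : 1 ≤ c0)
    -- eigendecomposition Δ_y 𝔹^R Δ_y = Q^R D^R (Q^R)ᵀ where 𝔹^R = ∑ B_l Δ_z² B_lᵀ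
    (BR : Matrix (Fin Ky) (Fin Ky) ℝ)
    (hBR : BR = ∑ l, B l * (Dmat gz) ^ 2 * (B l)ᵀ)
    (QR : Matrix (Fin Ky) (Fin K) ℝ) (hQorth : QRᵀ * QR = 1)
    (dR : Fin K → ℝ)
    (hQdec : Dmat gy * BR * Dmat gy = QR * Matrix.diagonal dR * QRᵀ)
    -- U = Y Δ_y⁻¹ Q^R
    (U : Matrix (Fin n) (Fin K) ℝ)
    (hU : U = memb gy * DmatInv gy * QR)
    (i j : Fin n) (k k' : Fin Ky) (hk : k = gy i) (hk' : k' = gy j) :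
    -- the exact identity
    (∑ m, dR m * (QR k m / Real.sqrt (csize gy k) -
        QR k' m / Real.sqrt (csize gy k')) ^ 2 =
      BR k k + BR k' k' - 2 * BR k k') ∧
    -- the consequent lower bound
    (c0 ^ 2 * L * (n : ℝ) ^ 2 * (∑ m, (U i m - U j m) ^ 2) ≥
      BR k k + BR k' k' - 2 * BR k k') := by
  subst hk hk' hBR hU
  have hsqrt_ne (p : Fin n) : Real.sqrt (csize gy (gy p)) ≠ 0 :=
    (Real.sqrt_pos.mpr (Nat.cast_pos.mpr (csize_apply_pos gy p))).ne'
  have hid := sum_mul_div_sub_div_sq_eq hQdec (hsqrt_ne i) (hsqrt_ne j)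
  rw [Dmat_mul_sum_mul_Dmat] at hQdec
  have hpsd := posSemidef_sum univ fun l _ => by
    simpa only [conjTranspose_eq_transpose_of_trivial] using
      posSemidef_self_mul_conjTranspose (Dmat gy * B l * Dmat gz)
  have htrace : (∑ l, (Dmat gy * B l * Dmat gz) * (Dmat gy * B l * Dmat gz)ᵀ).trace
      ≤ c0 ^ 2 * L * n ^ 2 := calc
    _ ≤ ∑ _l : Fin L, (n : ℝ) * n := by
      rw [trace_sum]
      exact sum_le_sum fun l _ => trace_Dmat_mul_mul_Dmat_mul_transpose_le gy gz (B l) (hB l)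
    _ ≤ c0 ^ 2 * L * n ^ 2 := by
      rw [sum_const, card_univ, Fintype.card_fin, nsmul_eq_mul, ← sq, mul_assoc]
      exact le_mul_of_one_le_left (by positivity) (one_le_pow₀ hc0)
  refine ⟨hid, ?_⟩
  rw [ge_iff_le, ← hid, mul_sum]
  refine sum_le_sum fun m _ => ?_
  rw [memb_mul_DmatInv_mul_apply, memb_mul_DmatInv_mul_apply]
  exact mul_le_mul_of_nonneg_right
    ((hpsd.le_trace_of_eq_mul_diagonal_mul_transpose hQorth hQdec m).trans htrace) (sq_nonneg _)

/-- the exact identity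
∑_m D^R_{mm} (Q^R_{km}/√n_k − Q^R_{k'm}/√n_{k'})² = 𝔹^R_{kk} + 𝔹^R_{k'k'} − 2𝔹^R_{kk'}
and the consequent lower bound c0² L n² ‖U_{i∗} − U_{j∗}‖₂² ≥ RHS. -/
theorem stmt17
    (n L Ky Kz K : ℕ) (hn : 0 < n) (hL : 0 < L) (hKy : 0 < Ky) (hKz : 0 < Kz)
    (gy : Fin n → Fin Ky) (gz : Fin n → Fin Kz)
    (B : Fin L → Matrix (Fin Ky) (Fin Kz) ℝ)
    (hB : ∀ l a b, 0 ≤ B l a b ∧ B l a b ≤ 1)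
    -- Assumption 1 (balanced clusters) with constant c0 ≥ 1
    (c0 : ℝ) (hc0 : 1 ≤ c0)
    (hbalY : ∀ k, (n : ℝ) / (c0 * Ky) ≤ (csize gy k : ℝ) ∧ (csize gy k : ℝ) ≤ c0 * n / Ky)
    (hbalZ : ∀ k, (n : ℝ) / (c0 * Kz) ≤ (csize gz k : ℝ) ∧ (csize gz k : ℝ) ≤ c0 * n / Kz)
    -- K = rank(∑ B_l B_lᵀ)
    (hrank : (∑ l, B l * (B l)ᵀ).rank = K)
    -- eigendecomposition Δ_y 𝔹^R Δ_y = Q^R D^R (Q^R)ᵀ where 𝔹^R = ∑ B_l Δ_z² B_lᵀ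
    (BR : Matrix (Fin Ky) (Fin Ky) ℝ)
    (hBR : BR = ∑ l, B l * (Dmat gz) ^ 2 * (B l)ᵀ)
    (QR : Matrix (Fin Ky) (Fin K) ℝ) (hQorth : QRᵀ * QR = 1)
    (dR : Fin K → ℝ) (hdR : ∀ m, dR m ≠ 0)
    (hQdec : Dmat gy * BR * Dmat gy = QR * Matrix.diagonal dR * QRᵀ)
    -- U = Y Δ_y⁻¹ Q^R
    (U : Matrix (Fin n) (Fin K) ℝ)
    (hU : U = memb gy * DmatInv gy * QR)
    (i j : Fin n) (k k' : Fin Ky) (hk : k = gy i) (hk' : k' = gy j) :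
    -- the exact identity
    (∑ m, dR m * (QR k m / Real.sqrt (csize gy k) -
        QR k' m / Real.sqrt (csize gy k')) ^ 2 =
      BR k k + BR k' k' - 2 * BR k k') ∧
    -- the consequent lower bound
    (c0 ^ 2 * L * (n : ℝ) ^ 2 * (∑ m, (U i m - U j m) ^ 2) ≥
      BR k k + BR k' k' - 2 * BR k k') :=
  stmt17_general n L Ky Kz K gy gz B hB c0 hc0 BR hBR QR hQorth dR hQdec U hU i j k k' hk hk'
end
end
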